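/- arXiv:2504.01227 — 3 statements merged into one kernel-verified Lean document; each statement's English description precedes it below -/
import Mathlib

section
/- For every probabilistic choice function ρ there exists a probability distribution π over choice types that represents ρ and satisfies π(⊴ s) = min_{i∈{1,…,n}} P_i(s_i) for every choice type s (the distribution induced by applying the Fréchet–Hoeffding upper bound (min-copula) to the cumulative choice functions). -/
open Finset

variable {n : ℕ} {S : Fin n → Type*} [∀ i, Fintype (S i)] [∀ i, LinearOrder (S i)]

/-- `ρ` is a probabilistic choice function: each `ρ i` is a probability distribution on `S i`. -/
def IsPCF (ρ : ∀ i, S i → ℝ) : Prop :=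
  (∀ i (x : S i), 0 ≤ ρ i x) ∧ ∀ i, ∑ x : S i, ρ i x = 1

/-- The cumulative choice function `P_i(x) = ∑_{y ≤ x} ρ_i(y)`. -/
noncomputable def cumul (ρ : ∀ i, S i → ℝ) (i : Fin n) (x : S i) : ℝ :=
  ∑ y ∈ Finset.univ.filter (fun y => y ≤ x), ρ i y

/-- `π` is a probability distribution over choice types. -/
def IsDist (π : (∀ i, S i) → ℝ) : Prop :=
  (∀ s, 0 ≤ π s) ∧ ∑ s : ∀ i, S i, π s = 1

/-- `π` represents `ρ`: the marginals of `π` agree with `ρ`. -/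
def Represents (π : (∀ i, S i) → ℝ) (ρ : ∀ i, S i → ℝ) : Prop :=
  ∀ i (x : S i), ∑ s ∈ Finset.univ.filter (fun s : ∀ i, S i => s i = x), π s = ρ i x

/-- `π(⊴ s)`: total mass on choice types componentwise below `s`. -/
noncomputable def cdfLe (π : (∀ i, S i) → ℝ) (s : ∀ i, S i) : ℝ :=
  ∑ t ∈ Finset.univ.filter (fun t : ∀ i, S i => ∀ i, t i ≤ s i), π t

/-!
The witness is the comonotone coupling: drive every coordinate by a single uniform `u ∈ (0, 1]`
and let coordinate `i` choose the `x` whose quantile interval `(P_i(x⁻), P_i(x)]` contains `u`.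
The mass of a choice type `t` is the length of the intersection of its quantile intervals. The
choice types below `s` then cover exactly `(0, min_i P_i(s_i)]`, and those with `t_i = x`
cover exactly the quantile interval of `x`, of length `ρ_i(x)`.
-/

open Function MeasureTheory

noncomputable def cumulLT (ρ : ∀ i, S i → ℝ) (i : Fin n) (x : S i) : ℝ :=
  ∑ y ∈ Finset.univ.filter (fun y => y < x), ρ i y

def quantileInterval (ρ : ∀ i, S i → ℝ) (i : Fin n) (x : S i) : Set ℝ :=
  Set.Ioc (cumulLT ρ i x) (cumul ρ i x)

def comonotoneCell (ρ : ∀ i, S i → ℝ) (t : ∀ i, S i) : Set ℝ :=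
  ⋂ i, quantileInterval ρ i (t i)

noncomputable def comonotoneDist (ρ : ∀ i, S i → ℝ) (t : ∀ i, S i) : ℝ :=
  volume.real (comonotoneCell ρ t)

section Cumul

variable {ρ : ∀ i, S i → ℝ} {i : Fin n}

theorem cumul_eq_cumulLT_add (x : S i) : cumul ρ i x = cumulLT ρ i x + ρ i x := by
  have h : Finset.univ.filter (· ≤ x) = insert x (Finset.univ.filter (· < x)) := by
    ext y
    simp [le_iff_lt_or_eq, or_comm]
  rw [cumul, h, Finset.sum_insert (by simp), cumulLT, add_comm]

theorem cumulLT_nonneg (hρ : ∀ x, 0 ≤ ρ i x) (x : S i) : 0 ≤ cumulLT ρ i x :=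
  Finset.sum_nonneg fun y _ => hρ y

theorem cumul_le_cumulLT (hρ : ∀ x, 0 ≤ ρ i x) {x y : S i} (h : x < y) :
    cumul ρ i x ≤ cumulLT ρ i y :=
  Finset.sum_le_sum_of_subset_of_nonneg
    (Finset.monotone_filter_right _ fun _ _ => (·.trans_lt h)) fun z _ _ => hρ z

theorem cumul_nonneg (hρ : ∀ x, 0 ≤ ρ i x) (x : S i) : 0 ≤ cumul ρ i x :=
  Finset.sum_nonneg fun y _ => hρ y

theorem cumul_le_sum (hρ : ∀ x, 0 ≤ ρ i x) (x : S i) : cumul ρ i x ≤ ∑ y, ρ i y :=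
  Finset.sum_le_sum_of_subset_of_nonneg (Finset.filter_subset _ _) fun y _ _ => hρ y

theorem cumul_mono (hρ : ∀ x, 0 ≤ ρ i x) : Monotone (cumul ρ i) := fun _ _ h =>
  Finset.sum_le_sum_of_subset_of_nonneg
    (Finset.monotone_filter_right _ fun _ _ => (·.trans h)) fun z _ _ => hρ z

theorem cumul_eq_sum_of_forall_le {m : S i} (hm : ∀ y, y ≤ m) :
    cumul ρ i m = ∑ x, ρ i x := by
  rw [cumul, Finset.filter_true_of_mem fun y _ => hm y]

theorem cumulLT_eq_zero_or_exists_cumul (z : S i) :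
    cumulLT ρ i z = 0 ∨ ∃ w < z, cumulLT ρ i z = cumul ρ i w := by
  by_cases hne : (Finset.univ.filter (· < z)).Nonempty
  · set w := (Finset.univ.filter (· < z)).max' hne
    have hwz : w < z := (Finset.mem_filter.mp (Finset.max'_mem _ hne)).2
    refine Or.inr ⟨w, hwz, congrArg (Finset.sum · _) ?_⟩
    ext y
    simp only [Finset.mem_filter, Finset.mem_univ, true_and]
    exact ⟨fun hy => Finset.le_max' _ y (by simpa using hy), fun hy => hy.trans_lt hwz⟩
  · rw [Finset.not_nonempty_iff_eq_empty] at hne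
    exact Or.inl (by rw [cumulLT, hne, Finset.sum_empty])

theorem volume_real_quantileInterval (hρ : ∀ x, 0 ≤ ρ i x) (x : S i) :
    volume.real (quantileInterval ρ i x) = ρ i x := by
  rw [quantileInterval, Real.volume_real_Ioc, cumul_eq_cumulLT_add, add_sub_cancel_left,
    max_eq_left (hρ x)]

theorem disjoint_quantileInterval (hρ : ∀ x, 0 ≤ ρ i x) {x y : S i} (h : x ≠ y) :
    Disjoint (quantileInterval ρ i x) (quantileInterval ρ i y) := by
  wlog hxy : x < y generalizing x y
  · exact (this h.symm (h.lt_or_gt.resolve_left hxy)).symm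
  exact Set.Ioc_disjoint_Ioc_of_le (cumul_le_cumulLT hρ hxy)

theorem exists_le_mem_quantileInterval {u : ℝ} (hu : 0 < u) {z : S i}
    (huz : u ≤ cumul ρ i z) : ∃ x ≤ z, u ∈ quantileInterval ρ i x := by
  induction z using WellFoundedLT.induction with
  | ind z ih =>
    by_cases hlt : cumulLT ρ i z < u
    · exact ⟨z, le_rfl, hlt, huz⟩
    rcases cumulLT_eq_zero_or_exists_cumul z with h0 | ⟨w, hwz, hw⟩
    · exact absurd (h0 ▸ hu) hlt
    · obtain ⟨x, hxw, hx⟩ := ih w hwz (hw ▸ not_lt.mp hlt)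
      exact ⟨x, hxw.trans hwz.le, hx⟩

theorem exists_mem_quantileInterval {u : ℝ} (hu : 0 < u)
    (hu1 : u ≤ ∑ x, ρ i x) : ∃ x, u ∈ quantileInterval ρ i x := by
  have : Nonempty (S i) :=
    Finset.univ_nonempty_iff.mp (Finset.nonempty_of_sum_ne_zero (hu.trans_le hu1).ne')
  obtain ⟨m, hm⟩ := Finite.exists_max (id : S i → S i)
  obtain ⟨x, -, hx⟩ :=
    exists_le_mem_quantileInterval hu ((cumul_eq_sum_of_forall_le hm).symm ▸ hu1)
  exact ⟨x, hx⟩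

end Cumul

section Cell

variable {ρ : ∀ i, S i → ℝ}

theorem mem_comonotoneCell {u : ℝ} {t : ∀ i, S i} :
    u ∈ comonotoneCell ρ t ↔ ∀ i, u ∈ quantileInterval ρ i (t i) :=
  Set.mem_iInter

theorem comonotoneCell_subset (t : ∀ i, S i) (i : Fin n) :
    comonotoneCell ρ t ⊆ quantileInterval ρ i (t i) :=
  Set.iInter_subset _ i

theorem pairwise_disjoint_comonotoneCell (hρ : ∀ i x, 0 ≤ ρ i x) :
    Pairwise (Disjoint on comonotoneCell ρ) := fun t t' hne => by
  obtain ⟨i, hi⟩ := Function.ne_iff.mp hne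
  exact (disjoint_quantileInterval (hρ i) hi).mono
    (comonotoneCell_subset t i) (comonotoneCell_subset t' i)

theorem sum_comonotoneDist [Nonempty (Fin n)] (hρ : ∀ i x, 0 ≤ ρ i x)
    (F : Finset (∀ i, S i)) :
    ∑ t ∈ F, comonotoneDist ρ t = volume.real (⋃ t ∈ F, comonotoneCell ρ t) := by
  obtain ⟨i⟩ := ‹Nonempty (Fin n)›
  exact (measureReal_biUnion_finset ((pairwise_disjoint_comonotoneCell hρ).set_pairwise _)
    (fun _ _ => MeasurableSet.iInter fun _ => measurableSet_Ioc)
    fun t _ => ((measure_mono (comonotoneCell_subset t i)).trans_lt measure_Ioc_lt_top).ne).symm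

theorem biUnion_comonotoneCell_le [Nonempty (Fin n)] (hρ : ∀ i x, 0 ≤ ρ i x) (s : ∀ i, S i) :
    ⋃ t ∈ Finset.univ.filter (fun t : ∀ i, S i => ∀ i, t i ≤ s i), comonotoneCell ρ t =
      Set.Ioc 0 (⨅ i, cumul ρ i (s i)) := by
  ext u
  simp only [Set.mem_iUnion, Finset.mem_filter, Finset.mem_univ, true_and, exists_prop,
    Set.mem_Ioc, le_ciInf_iff (Set.finite_range _).bddBelow, mem_comonotoneCell]
  constructor
  · rintro ⟨t, hts, hu⟩
    obtain ⟨i⟩ := ‹Nonempty (Fin n)›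
    exact ⟨(cumulLT_nonneg (hρ i) _).trans_lt (hu i).1,
      fun i => (hu i).2.trans (cumul_mono (hρ i) (hts i))⟩
  · rintro ⟨hu0, hus⟩
    choose t hts hu using fun i => exists_le_mem_quantileInterval hu0 (hus i)
    exact ⟨t, hts, hu⟩

theorem biUnion_comonotoneCell_eq (hρ : IsPCF ρ) (i : Fin n) (x : S i) :
    ⋃ t ∈ Finset.univ.filter (fun t : ∀ i, S i => t i = x), comonotoneCell ρ t =
      quantileInterval ρ i x := by
  obtain ⟨hpos, hsum⟩ := hρ
  refine subset_antisymm (Set.iUnion₂_subset fun t ht =>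
    (Finset.mem_filter.mp ht).2 ▸ comonotoneCell_subset t i) fun u hu => ?_
  have hu0 : 0 < u := (cumulLT_nonneg (hpos i) x).trans_lt hu.1
  have hu1 : ∀ j, u ≤ ∑ y, ρ j y := fun j =>
    hsum j ▸ hsum i ▸ hu.2.trans (cumul_le_sum (hpos i) x)
  choose t ht using fun j => exists_mem_quantileInterval hu0 (hu1 j)
  refine Set.mem_biUnion (x := update t i x) (by simp) (mem_comonotoneCell.mpr fun j => ?_)
  rcases eq_or_ne j i with rfl | hj
  · simpa using hu
  · simpa [hj] using ht j

end Cell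

theorem Represents.sum_eq_one {π : (∀ i, S i) → ℝ} {ρ : ∀ i, S i → ℝ} (h : Represents π ρ)
    (i : Fin n) (hρ : ∑ x, ρ i x = 1) : ∑ s, π s = 1 := by
  rw [← Finset.sum_fiberwise Finset.univ (fun s => s i) π]
  simp_rw [h i]
  exact hρ

theorem represents_comonotoneDist [Nonempty (Fin n)] {ρ : ∀ i, S i → ℝ} (hρ : IsPCF ρ) :
    Represents (comonotoneDist ρ) ρ := fun i x => by
  rw [sum_comonotoneDist hρ.1, biUnion_comonotoneCell_eq hρ,
    volume_real_quantileInterval (hρ.1 i)]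

theorem cdfLe_comonotoneDist [Nonempty (Fin n)] {ρ : ∀ i, S i → ℝ} (hρ : ∀ i x, 0 ≤ ρ i x)
    (s : ∀ i, S i) : cdfLe (comonotoneDist ρ) s = ⨅ i, cumul ρ i (s i) := by
  rw [cdfLe, sum_comonotoneDist hρ, biUnion_comonotoneCell_le hρ, Real.volume_real_Ioc, sub_zero,
    max_eq_left (le_ciInf fun i => cumul_nonneg (hρ i) (s i))]

theorem min_copula_representation_exists_general (hn : 0 < n)
    (ρ : ∀ i, S i → ℝ) (hρ : IsPCF ρ) :
    ∃ π : (∀ i, S i) → ℝ, IsDist π ∧ Represents π ρ ∧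
      ∀ s : ∀ i, S i, cdfLe π s = ⨅ i, cumul ρ i (s i) := by
  have : Nonempty (Fin n) := ⟨⟨0, hn⟩⟩
  have hrep := represents_comonotoneDist hρ
  exact ⟨comonotoneDist ρ, ⟨fun _ => measureReal_nonneg, hrep.sum_eq_one ⟨0, hn⟩ (hρ.2 _)⟩, hrep,
    cdfLe_comonotoneDist hρ.1⟩

/-- every pcf admits a representation whose joint cdf is the
Fréchet–Hoeffding upper bound (min-copula) of the marginal cumulative choice functions. -/
theorem min_copula_representation_exists (hn : 0 < n) [∀ i, Nonempty (S i)]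
    (ρ : ∀ i, S i → ℝ) (hρ : IsPCF ρ) :
    ∃ π : (∀ i, S i) → ℝ, IsDist π ∧ Represents π ρ ∧
      ∀ s : ∀ i, S i, cdfLe π s = ⨅ i, cumul ρ i (s i) :=
  min_copula_representation_exists_general hn ρ hρ
end

section
/- Let ρ be a probabilistic choice function and let π and π' be two probability distributions over choice types, each representing ρ, such that the support of π is a chain under the componentwise order and the support of π' is a chain under the componentwise order. Then π = π' (uniqueness of the progressive random choice representation). -/
open Finset

variable {n : ℕ} {S : Fin n → Type*} [∀ i, Fintype (S i)] [∀ i, LinearOrder (S i)]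

lemma marginal_cumul (π : (∀ i, S i) → ℝ) (ρ : ∀ i, S i → ℝ)
    (hrep : Represents π ρ) (i : Fin n) (x : S i) :
    ∑ t ∈ Finset.univ.filter (fun t : ∀ i, S i => t i ≤ x), π t = cumul ρ i x := by
  have h : cumul ρ i x = ∑ y ∈ Finset.univ.filter (fun y => y ≤ x),
      ∑ t ∈ Finset.univ.filter (fun t : ∀ i, S i => t i = y), π t :=
    Finset.sum_congr rfl (fun y _ => (hrep i y).symm)
  rw [h, Finset.sum_fiberwise_eq_sum_filter]
  apply Finset.sum_congr _ (fun _ _ => rfl)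
  ext t
  simp

lemma cdfLe_le_cumul (π : (∀ i, S i) → ℝ) (ρ : ∀ i, S i → ℝ)
    (hpos : ∀ s, 0 ≤ π s) (hrep : Represents π ρ) (i : Fin n) (s : ∀ i, S i) :
    cdfLe π s ≤ cumul ρ i (s i) := by
  rw [← marginal_cumul π ρ hrep i (s i)]
  apply Finset.sum_le_sum_of_subset_of_nonneg
  · intro t ht
    simp only [Finset.mem_filter, Finset.mem_univ, true_and] at ht ⊢
    exact ht i
  · intro t _ _
    exact hpos t

/-- One-sided comparison of cdfs: if the support of `π` is a chain, then `cdfLe π` dominates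
the cdf of any other representation. -/
lemma cdfLe_ge (ρ : ∀ i, S i → ℝ)
    (π π' : (∀ i, S i) → ℝ)
    (hdist : IsDist π) (hdist' : IsDist π')
    (hrep : Represents π ρ) (hrep' : Represents π' ρ)
    (hchain : ∀ s s' : ∀ i, S i, 0 < π s → 0 < π s' →
      (∀ i, s i ≤ s' i) ∨ (∀ i, s' i ≤ s i))
    (s : ∀ i, S i) : cdfLe π' s ≤ cdfLe π s := by
  by_contra hlt
  push_neg at hlt
  -- hlt : cdfLe π s < cdfLe π' s
  have hsplit : cdfLe π s
      + ∑ t ∈ Finset.univ.filter (fun t : ∀ i, S i => ¬ ∀ i, t i ≤ s i), π t = 1 := by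
    rw [cdfLe, Finset.sum_filter_add_sum_filter_not]
    exact hdist.2
  have hcdf'le : cdfLe π' s ≤ 1 := by
    calc cdfLe π' s ≤ ∑ t : ∀ i, S i, π' t := by
          apply Finset.sum_le_sum_of_subset_of_nonneg (Finset.filter_subset _ _)
          intro t _ _; exact hdist'.1 t
      _ = 1 := hdist'.2
  -- the set of support points not below s is nonempty
  have hBpos : 0 < ∑ t ∈ Finset.univ.filter (fun t : ∀ i, S i => ¬ ∀ i, t i ≤ s i), π t := by
    linarith
  have hBne : (Finset.univ.filter
      (fun t : ∀ i, S i => (¬ ∀ i, t i ≤ s i) ∧ 0 < π t)).Nonempty := by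
    by_contra hemp
    rw [Finset.not_nonempty_iff_eq_empty] at hemp
    have hzero : ∀ t ∈ Finset.univ.filter (fun t : ∀ i, S i => ¬ ∀ i, t i ≤ s i), π t = 0 := by
      intro t ht
      simp only [Finset.mem_filter, Finset.mem_univ, true_and] at ht
      by_contra hne
      have hp : 0 < π t := lt_of_le_of_ne (hdist.1 t) (Ne.symm hne)
      have : t ∈ Finset.univ.filter
          (fun t : ∀ i, S i => (¬ ∀ i, t i ≤ s i) ∧ 0 < π t) := by
        simp only [Finset.mem_filter, Finset.mem_univ, true_and]
        exact ⟨ht, hp⟩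
      rw [hemp] at this
      exact absurd this (Finset.notMem_empty t)
    rw [Finset.sum_eq_zero hzero] at hBpos
    exact lt_irrefl 0 hBpos
  -- take a minimal element m of that set
  obtain ⟨m, hmB, hmin⟩ : ∃ m ∈ _, ∀ x ∈ _, ¬ x < m := by
    obtain ⟨m, hm⟩ := Finset.exists_minimal hBne
    exact ⟨m, hm.1, fun x hx hlt => hlt.not_ge (hm.2 hx hlt.le)⟩
  simp only [Finset.mem_filter, Finset.mem_univ, true_and] at hmB
  obtain ⟨hmns, hmpos⟩ := hmB
  push_neg at hmns
  obtain ⟨i0, hi0⟩ := hmns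
  -- every support point not below s lies above m, hence has i0-coordinate > s i0
  have hkey : ∀ t : ∀ i, S i, (¬ ∀ i, t i ≤ s i) → 0 < π t → s i0 < t i0 := by
    intro t ht htpos
    have hmt : ∀ i, m i ≤ t i := by
      rcases hchain m t hmpos htpos with h | h
      · exact h
      · -- t ≤ m; by minimality of m, m ≤ t
        have htB : t ∈ Finset.univ.filter
            (fun t : ∀ i, S i => (¬ ∀ i, t i ≤ s i) ∧ 0 < π t) := by
          simp only [Finset.mem_filter, Finset.mem_univ, true_and]
          exact ⟨ht, htpos⟩
        have hnlt := hmin t htB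
        have hle : t ≤ m := fun i => h i
        have hml : m ≤ t := by
          by_contra hml
          exact hnlt (lt_iff_le_not_ge.mpr ⟨hle, hml⟩)
        exact fun i => hml i
    exact lt_of_lt_of_le hi0 (hmt i0)
  -- hence the mass outside is at most the mass with i0-coordinate > s i0
  have hsubsum : ∑ t ∈ Finset.univ.filter (fun t : ∀ i, S i => ¬ ∀ i, t i ≤ s i), π t
      ≤ ∑ t ∈ Finset.univ.filter (fun t : ∀ i, S i => ¬ t i0 ≤ s i0), π t := by
    rw [← Finset.sum_filter_of_ne (p := fun t : ∀ i, S i => 0 < π t)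
      (s := Finset.univ.filter (fun t : ∀ i, S i => ¬ ∀ i, t i ≤ s i)) (f := π)
      (by intro t ht hne; exact lt_of_le_of_ne (hdist.1 t) (Ne.symm hne))]
    apply Finset.sum_le_sum_of_subset_of_nonneg
    · intro t ht
      simp only [Finset.mem_filter, Finset.mem_univ, true_and] at ht ⊢
      exact not_le.mpr (hkey t ht.1 ht.2)
    · intro t _ _; exact hdist.1 t
  have hsplit2 : cumul ρ i0 (s i0)
      + ∑ t ∈ Finset.univ.filter (fun t : ∀ i, S i => ¬ t i0 ≤ s i0), π t = 1 := by
    rw [← marginal_cumul π ρ hrep i0 (s i0), Finset.sum_filter_add_sum_filter_not]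
    exact hdist.2
  have h1 : cumul ρ i0 (s i0) ≤ cdfLe π s := by linarith
  have h2 : cdfLe π' s ≤ cumul ρ i0 (s i0) := cdfLe_le_cumul π' ρ hdist'.1 hrep' i0 s
  linarith

/-- Mass strictly below `t`. -/
noncomputable def lowSum (π : (∀ i, S i) → ℝ) (t : ∀ i, S i) : ℝ :=
  ∑ u ∈ (Finset.univ.filter (fun u : ∀ i, S i => ∀ i, u i ≤ t i)).erase t, π u

lemma cdfLe_eq_add_lowSum (π : (∀ i, S i) → ℝ) (t : ∀ i, S i) :
    cdfLe π t = π t + lowSum π t := by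
  rw [cdfLe, lowSum, ← Finset.add_sum_erase _ π
    (by simp : t ∈ Finset.univ.filter (fun u : ∀ i, S i => ∀ i, u i ≤ t i))]

lemma lowSum_le (π π' : (∀ i, S i) → ℝ)
    (hdist : IsDist π) (hdist' : IsDist π')
    (hchain : ∀ s s' : ∀ i, S i, 0 < π s → 0 < π s' →
      (∀ i, s i ≤ s' i) ∨ (∀ i, s' i ≤ s i))
    (hcdf : ∀ s, cdfLe π s = cdfLe π' s)
    (t : ∀ i, S i) : lowSum π t ≤ lowSum π' t := by
  set E := ((Finset.univ.filter (fun u : ∀ i, S i => ∀ i, u i ≤ t i)).erase t).filter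
    (fun u => 0 < π u) with hE
  have hLE : lowSum π t = ∑ u ∈ E, π u := by
    rw [lowSum, ← Finset.sum_filter_of_ne (p := fun u : ∀ i, S i => 0 < π u)
      (f := π) (by intro u _ hne; exact lt_of_le_of_ne (hdist.1 u) (Ne.symm hne))]
  have hlow'nonneg : 0 ≤ lowSum π' t :=
    Finset.sum_nonneg (fun u _ => hdist'.1 u)
  rcases Finset.eq_empty_or_nonempty E with hemp | hne
  · rw [hLE, hemp, Finset.sum_empty]; exact hlow'nonneg
  obtain ⟨m, hmE, hmax⟩ : ∃ m ∈ E, ∀ x ∈ E, ¬ m < x := by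
    obtain ⟨m, hm⟩ := Finset.exists_maximal hne
    exact ⟨m, hm.1, fun x hx hlt => hlt.not_ge (hm.2 hx hlt.le)⟩
  have hmE' := hmE
  rw [hE] at hmE'
  simp only [Finset.mem_filter, Finset.mem_erase, Finset.mem_univ, true_and] at hmE'
  obtain ⟨⟨hmt, hmle⟩, hmpos⟩ := hmE'
  -- every element of E is ≤ m
  have hEle : ∀ u ∈ E, ∀ i, u i ≤ m i := by
    intro u huE
    have huE' := huE
    rw [hE] at huE'
    simp only [Finset.mem_filter, Finset.mem_erase, Finset.mem_univ, true_and] at huE'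
    rcases hchain u m huE'.2 hmpos with h | h
    · exact h
    · -- m ≤ u : by maximality ¬ m < u, so u = m
      have hnlt := hmax u huE
      have hum : u ≤ m := by
        by_contra hum
        exact hnlt (lt_iff_le_not_ge.mpr ⟨fun i => h i, hum⟩)
      exact fun i => hum i
  have h1 : lowSum π t ≤ cdfLe π m := by
    rw [hLE, cdfLe]
    apply Finset.sum_le_sum_of_subset_of_nonneg
    · intro u huE
      simp only [Finset.mem_filter, Finset.mem_univ, true_and]
      exact hEle u huE
    · intro u _ _; exact hdist.1 u
  have h2 : cdfLe π' m ≤ lowSum π' t := by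
    rw [cdfLe, lowSum]
    apply Finset.sum_le_sum_of_subset_of_nonneg
    · intro u hu
      simp only [Finset.mem_filter, Finset.mem_univ, true_and] at hu
      simp only [Finset.mem_erase, Finset.mem_filter, Finset.mem_univ, true_and]
      constructor
      · intro he
        -- u = t and u ≤ m ≤ t forces m = t, contradiction
        apply hmt
        funext i
        exact le_antisymm (hmle i) (he ▸ hu i)
      · exact fun i => le_trans (hu i) (hmle i)
    · intro u _ _; exact hdist'.1 u
  calc lowSum π t ≤ cdfLe π m := h1
    _ = cdfLe π' m := hcdf m
    _ ≤ lowSum π' t := h2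

/-- uniqueness of the progressive (chain-supported) representation. -/
theorem progressive_representation_unique [∀ i, Nonempty (S i)]
    (ρ : ∀ i, S i → ℝ) (hρ : IsPCF ρ)
    (π π' : (∀ i, S i) → ℝ)
    (hdist : IsDist π) (hdist' : IsDist π')
    (hrep : Represents π ρ) (hrep' : Represents π' ρ)
    (hchain : ∀ s s' : ∀ i, S i, 0 < π s → 0 < π s' →
      (∀ i, s i ≤ s' i) ∨ (∀ i, s' i ≤ s i))
    (hchain' : ∀ s s' : ∀ i, S i, 0 < π' s → 0 < π' s' →
      (∀ i, s i ≤ s' i) ∨ (∀ i, s' i ≤ s i)) :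
    π = π' := by
  have hcdf : ∀ s, cdfLe π s = cdfLe π' s := fun s =>
    le_antisymm (cdfLe_ge ρ π' π hdist' hdist hrep' hrep hchain' s)
      (cdfLe_ge ρ π π' hdist hdist' hrep hrep' hchain s)
  have hcdf' : ∀ s, cdfLe π' s = cdfLe π s := fun s => (hcdf s).symm
  funext t
  have hlow : lowSum π t = lowSum π' t :=
    le_antisymm (lowSum_le π π' hdist hdist' hchain hcdf t)
      (lowSum_le π' π hdist' hdist hchain' hcdf' t)
  have h1 := cdfLe_eq_add_lowSum π t
  have h2 := cdfLe_eq_add_lowSum π' t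
  have h3 := hcdf t
  linarith
end

section
/- Let ρ be a probabilistic choice function and, for each i, let s̄_i denote the maximum element of S_i. If ∑_{i=1}^n (1 − ρ_i(s̄_i)) ≤ 1 (equivalently, ρ admits a representation supported on near-optimal choice types), then ρ is identified by the Fréchet–Hoeffding lower bound: there exists a probability distribution π over choice types that represents ρ and satisfies π(⊴ s) = max(∑_{i=1}^n P_i(s_i) + 1 − n, 0) for every choice type s. -/
/-!
Put mass `ρ i x` on the choice type that deviates from `sbar` only in coordinate `i`, where it
takes the value `x ≠ sbar i`, and the remaining mass `1 - ∑ i, (1 - ρ i (sbar i)) ≥ 0` on `sbar`.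
This distribution represents `ρ` and lives on near-optimal types, and every such representation
attains the Fréchet–Hoeffding lower bound. If `s` deviates from `sbar` in at most one
coordinate `i`, then `π(⊴ s)` is the `i`-th marginal `P_i(s_i)`, while `P_j(s_j) = 1` for `j ≠ i`.
If `s` deviates in two coordinates `i ≠ j`, no near-optimal type lies below `s`, so `π(⊴ s) = 0`,
and the bound is nonpositive because `P_i(s_i) ≤ 1 - ρ i (sbar i)`, giving
`∑ P + 1 - n ≤ P_i(s_i) + P_j(s_j) - 1 ≤ ∑ k, (1 - ρ k (sbar k)) - 1 ≤ 0`.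
-/

open Finset

variable {n : ℕ} {S : Fin n → Type*} [∀ i, Fintype (S i)] [∀ i, LinearOrder (S i)]

def IsNearOptimal (sbar s : ∀ i, S i) : Prop :=
  {i | s i ≠ sbar i}.Subsingleton

namespace IsPCF

variable {ρ : ∀ i, S i → ℝ}

theorem cumul_nonneg (hρ : IsPCF ρ) (i : Fin n) (x : S i) : 0 ≤ cumul ρ i x :=
  sum_nonneg fun y _ => hρ.1 i y

theorem cumul_le_one (hρ : IsPCF ρ) (i : Fin n) (x : S i) : cumul ρ i x ≤ 1 :=
  hρ.2 i ▸ sum_le_univ_sum_of_nonneg (hρ.1 i)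

theorem cumul_eq_one_of_isTop (hρ : IsPCF ρ) {i : Fin n} {x : S i} (hx : ∀ y, y ≤ x) :
    cumul ρ i x = 1 := by
  rw [cumul, filter_true_of_mem fun y _ => hx y, hρ.2 i]

theorem cumul_add_le_one (hρ : IsPCF ρ) {i : Fin n} {x y : S i} (hxy : x < y) :
    cumul ρ i x + ρ i y ≤ 1 := by
  have hy : y ∉ univ.filter (· ≤ x) := by simpa using hxy
  rw [cumul, add_comm, ← sum_insert hy]
  exact hρ.2 i ▸ sum_le_univ_sum_of_nonneg (hρ.1 i)

end IsPCF

section Marginals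

variable {π : (∀ i, S i) → ℝ} {ρ : ∀ i, S i → ℝ}

theorem Represents.sum_filter_apply (hπ : Represents π ρ) (i : Fin n) (q : S i → Prop)
    [DecidablePred q] :
    ∑ t ∈ univ.filter (fun t : ∀ i, S i => q (t i)), π t = ∑ x ∈ univ.filter q, ρ i x := by
  rw [← sum_fiberwise_of_maps_to (g := fun t => t i) (t := univ.filter q) (by simp)]
  refine sum_congr rfl fun x hx => ?_
  rw [← hπ i x, filter_filter]
  exact sum_congr (filter_congr fun t _ => by simp_all) fun _ _ => rfl

theorem Represents.cdfLe_eq_cumul (hπ : Represents π ρ) {s : ∀ i, S i} (i : Fin n)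
    (hs : ∀ j ≠ i, ∀ x : S j, x ≤ s j) : cdfLe π s = cumul ρ i (s i) := by
  rw [cdfLe, cumul, ← hπ.sum_filter_apply i (· ≤ s i)]
  refine sum_congr (filter_congr fun t _ => ⟨fun h => h i, fun h j => ?_⟩) fun _ _ => rfl
  by_cases hj : j = i
  · exact hj ▸ h
  · exact hs j hj (t j)

theorem IsDist.cdfLe_of_isTop (hπ : IsDist π) {s : ∀ i, S i} (hs : ∀ i (x : S i), x ≤ s i) :
    cdfLe π s = 1 := by
  rw [cdfLe, filter_true_of_mem fun t _ i => hs i (t i), hπ.2]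

theorem cdfLe_eq_zero_of_not_isNearOptimal {sbar s : ∀ i, S i}
    (hsbar : ∀ i (x : S i), x ≤ sbar i) (hπ : ∀ t, π t ≠ 0 → IsNearOptimal sbar t)
    (hs : ¬IsNearOptimal sbar s) : cdfLe π s = 0 := by
  refine sum_eq_zero fun t ht => not_not.1 fun hπt => hs ((hπ t hπt).anti fun i hi hti => hi ?_)
  exact le_antisymm (hsbar i (s i)) (hti ▸ (mem_filter.1 ht).2 i)

end Marginals

section FrechetHoeffding

variable {ρ : ∀ i, S i → ℝ} {sbar : ∀ i, S i}

theorem sum_one_sub_cumul_eq_of_isTop (hρ : IsPCF ρ) {s : ∀ i, S i} (i : Fin n)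
    (hs : ∀ j ≠ i, ∀ x : S j, x ≤ s j) :
    ∑ j, (1 - cumul ρ j (s j)) = 1 - cumul ρ i (s i) :=
  sum_eq_single i (fun j _ hj => by rw [hρ.cumul_eq_one_of_isTop (hs j hj), sub_self])
    (fun h => (h (mem_univ i)).elim)

theorem FH_lower_nonpos_of_not_isNearOptimal (hρ : IsPCF ρ)
    (hsbar : ∀ i (x : S i), x ≤ sbar i) (hsum : ∑ i, (1 - ρ i (sbar i)) ≤ 1)
    {s : ∀ i, S i} (hs : ¬IsNearOptimal sbar s) :
    1 - ∑ i, (1 - cumul ρ i (s i)) ≤ 0 := by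
  obtain ⟨i, hi, j, hj, hij⟩ : ∃ i, s i ≠ sbar i ∧ ∃ j, s j ≠ sbar j ∧ i ≠ j := by
    simpa [IsNearOptimal, Set.Subsingleton] using hs
  have hmistake : ∀ k, s k ≠ sbar k → ρ k (sbar k) ≤ 1 - cumul ρ k (s k) := fun k hk => by
    linarith [hρ.cumul_add_le_one ((hsbar k (s k)).lt_of_ne hk)]
  have hρ_le_one : ∀ k, ρ k (sbar k) ≤ 1 := fun k =>
    hρ.2 k ▸ single_le_sum (fun x _ => hρ.1 k x) (mem_univ _)
  calc 1 - ∑ k, (1 - cumul ρ k (s k))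
      ≤ 1 - ((1 - cumul ρ i (s i)) + (1 - cumul ρ j (s j))) := by
        gcongr
        exact add_le_sum (fun k _ => sub_nonneg.2 (hρ.cumul_le_one k (s k)))
          (mem_univ i) (mem_univ j) hij
    _ ≤ (1 - ρ i (sbar i)) + (1 - ρ j (sbar j)) - 1 := by
        linarith [hmistake i hi, hmistake j hj]
    _ ≤ ∑ k, (1 - ρ k (sbar k)) - 1 := by
        gcongr
        exact add_le_sum (fun k _ => sub_nonneg.2 (hρ_le_one k)) (mem_univ i) (mem_univ j) hij
    _ ≤ 0 := by linarith

theorem cdfLe_eq_FH_lower_of_isNearOptimal {π : (∀ i, S i) → ℝ} (hρ : IsPCF ρ)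
    (hsbar : ∀ i (x : S i), x ≤ sbar i) (hsum : ∑ i, (1 - ρ i (sbar i)) ≤ 1)
    (hπ : IsDist π) (hrep : Represents π ρ) (hnear : ∀ t, π t ≠ 0 → IsNearOptimal sbar t)
    (s : ∀ i, S i) : cdfLe π s = max (∑ i, cumul ρ i (s i) + 1 - (n : ℝ)) 0 := by
  have hFH : ∑ i, cumul ρ i (s i) + 1 - (n : ℝ) = 1 - ∑ i, (1 - cumul ρ i (s i)) := by
    simp only [sum_sub_distrib, sum_const, card_univ, Fintype.card_fin, nsmul_eq_mul, mul_one]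
    ring
  rw [hFH]
  by_cases hs : IsNearOptimal sbar s
  · rcases hs.eq_empty_or_singleton with hs | ⟨i, hs⟩
    · have htop : ∀ j (x : S j), x ≤ s j := fun j x => by
        have hj : s j = sbar j := by simpa using Set.eq_empty_iff_forall_notMem.1 hs j
        exact hj ▸ hsbar j x
      rw [hπ.cdfLe_of_isTop htop,
        sum_eq_zero fun j _ => by rw [hρ.cumul_eq_one_of_isTop (htop j), sub_self]]
      norm_num
    · have htop : ∀ j ≠ i, ∀ x : S j, x ≤ s j := fun j hji x => by
        have hj : s j = sbar j := by simpa [hji] using Set.ext_iff.1 hs j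
        exact hj ▸ hsbar j x
      rw [hrep.cdfLe_eq_cumul i htop, sum_one_sub_cumul_eq_of_isTop hρ i htop, sub_sub_cancel,
        max_eq_left (hρ.cumul_nonneg i (s i))]
  · rw [cdfLe_eq_zero_of_not_isNearOptimal hsbar hnear hs,
      max_eq_right (FH_lower_nonpos_of_not_isNearOptimal hρ hsbar hsum hs)]

end FrechetHoeffding

section OneMistakeDist

variable {ρ : ∀ i, S i → ℝ} {sbar : ∀ i, S i}

variable (ρ sbar) in
/-- `δ sbar + ∑ i, ∑ x, ρ i x • (δ (sbar[i ↦ x]) - δ sbar)`: written as corrections to `δ sbar`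
so that in the `i`-th marginal only the `i`-th correction survives. -/
noncomputable def oneMistakeDist (s : ∀ i, S i) : ℝ :=
  (if sbar = s then 1 else 0) +
    ∑ i, ∑ x, ρ i x *
      ((if Function.update sbar i x = s then 1 else 0) - if sbar = s then 1 else 0)

variable (ρ sbar) in
theorem sum_oneMistakeDist (A : Finset (∀ i, S i)) :
    ∑ s ∈ A, oneMistakeDist ρ sbar s =
      (if sbar ∈ A then 1 else 0) +
        ∑ i, ∑ x, ρ i x *
          ((if Function.update sbar i x ∈ A then 1 else 0) - if sbar ∈ A then 1 else 0) := by
  simp only [oneMistakeDist, sum_add_distrib, sum_ite_eq]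
  rw [sum_comm]
  refine congrArg _ (sum_congr rfl fun i _ => ?_)
  rw [sum_comm]
  simp only [← mul_sum, sum_sub_distrib, sum_ite_eq]

theorem oneMistakeDist_self (hρ : IsPCF ρ) :
    oneMistakeDist ρ sbar sbar = 1 - ∑ i, (1 - ρ i (sbar i)) := by
  simp [oneMistakeDist, Function.update_eq_self_iff, mul_sub, sum_sub_distrib, hρ.2]
  ring

theorem oneMistakeDist_nonneg (hρ : IsPCF ρ) (hsum : ∑ i, (1 - ρ i (sbar i)) ≤ 1)
    (s : ∀ i, S i) : 0 ≤ oneMistakeDist ρ sbar s := by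
  by_cases hs : sbar = s
  · rw [← hs, oneMistakeDist_self hρ]
    linarith
  · simp only [oneMistakeDist, if_neg hs, sub_zero, zero_add]
    exact sum_nonneg fun i _ => sum_nonneg fun x _ =>
      mul_nonneg (hρ.1 i x) (by split_ifs <;> norm_num)

theorem isDist_oneMistakeDist (hρ : IsPCF ρ) (hsum : ∑ i, (1 - ρ i (sbar i)) ≤ 1) :
    IsDist (oneMistakeDist ρ sbar) :=
  ⟨oneMistakeDist_nonneg hρ hsum, by simp [sum_oneMistakeDist]⟩

theorem represents_oneMistakeDist (hρ : IsPCF ρ) : Represents (oneMistakeDist ρ sbar) ρ := by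
  intro i x
  rw [sum_oneMistakeDist, sum_eq_single i]
  · simp [mul_sub, sum_sub_distrib, hρ.2 i]
  · intro j _ hji
    simp [Function.update_of_ne (Ne.symm hji)]
  · simp

theorem isNearOptimal_of_oneMistakeDist_ne_zero {s : ∀ i, S i}
    (hs : oneMistakeDist ρ sbar s ≠ 0) : IsNearOptimal sbar s := by
  contrapose! hs
  have hsbar : sbar ≠ s := by
    rintro rfl
    simp [IsNearOptimal] at hs
  have hupdate : ∀ i x, Function.update sbar i x ≠ s := by
    rintro i x rfl
    exact hs ((Set.subsingleton_singleton (a := i)).anti fun _ hj =>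
      not_not.1 fun hji => hj (Function.update_of_ne hji x sbar))
  simp [oneMistakeDist, hsbar, hupdate]

end OneMistakeDist

theorem one_mistake_identified_by_FH_lower_general
    (ρ : ∀ i, S i → ℝ) (hρ : IsPCF ρ)
    (sbar : ∀ i, S i) (hsbar : ∀ i (x : S i), x ≤ sbar i)
    (hsum : ∑ i, (1 - ρ i (sbar i)) ≤ 1) :
    ∃ π : (∀ i, S i) → ℝ, IsDist π ∧ Represents π ρ ∧
      ∀ s : ∀ i, S i, cdfLe π s = max (∑ i, cumul ρ i (s i) + 1 - (n : ℝ)) 0 :=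
  ⟨oneMistakeDist ρ sbar, isDist_oneMistakeDist hρ hsum, represents_oneMistakeDist hρ,
    cdfLe_eq_FH_lower_of_isNearOptimal hρ hsbar hsum (isDist_oneMistakeDist hρ hsum)
      (represents_oneMistakeDist hρ) fun _ => isNearOptimal_of_oneMistakeDist_ne_zero⟩

/-- a pcf consistent with the 1-mistake model is identified by the
Fréchet–Hoeffding lower bound. -/
theorem one_mistake_identified_by_FH_lower [∀ i, Nonempty (S i)]
    (ρ : ∀ i, S i → ℝ) (hρ : IsPCF ρ)
    (sbar : ∀ i, S i) (hsbar : ∀ i (x : S i), x ≤ sbar i)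
    (hsum : ∑ i, (1 - ρ i (sbar i)) ≤ 1) :
    ∃ π : (∀ i, S i) → ℝ, IsDist π ∧ Represents π ρ ∧
      ∀ s : ∀ i, S i, cdfLe π s = max (∑ i, cumul ρ i (s i) + 1 - (n : ℝ)) 0 :=
  one_mistake_identified_by_FH_lower_general ρ hρ sbar hsbar hsum
end
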